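/- There is no binary self-orthogonal [61,6,30] code; that is, no 6-dimensional self-orthogonal subspace of F_2^61 has minimum distance 30. -/

import Mathlib

open Finset

/-- Hamming weight of a binary vector. -/
def wt {ι : Type*} [Fintype ι] (x : ι → ZMod 2) : ℕ :=
  (Finset.univ.filter fun i => x i ≠ 0).card

/-- A binary linear code is self-orthogonal if any two codewords are orthogonal. -/
def SelfOrthogonal {ι : Type*} [Fintype ι] (C : Submodule (ZMod 2) (ι → ZMod 2)) : Prop :=
  ∀ x ∈ C, ∀ y ∈ C, ∑ i, x i * y i = 0

/-- `C` has minimum distance exactly `d`: some nonzero codeword has weight `d`,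
and every nonzero codeword has weight at least `d`. -/
def HasMinDist {ι : Type*} [Fintype ι] (C : Submodule (ZMod 2) (ι → ZMod 2)) (d : ℕ) : Prop :=
  (∃ x ∈ C, x ≠ 0 ∧ wt x = d) ∧ ∀ x ∈ C, x ≠ 0 → d ≤ wt x

/-- The Griesmer function `g(k,d) = ∑_{i=0}^{k-1} ⌈d/2^i⌉` (ceiling division). -/
def griesmerBound (k d : ℕ) : ℕ :=
  ∑ i ∈ Finset.range k, (d + 2 ^ i - 1) / 2 ^ i

/-!
Let `G` be a generator matrix of the code and `W f` the weight of the codeword `f ᵥ* G`.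
Self-orthogonality makes every weight even and `f ↦ W f / 2 (mod 2)` additive, so exactly 32
codewords have weight `≡ 2 (mod 4)`, hence at least 30, and the other 31 nonzero ones have
weight at least 32. Counting column by column, `∑ W f = 32 · #(nonzero columns) ≤ 32 · 61`,
which equals `32 · 30 + 31 · 32`: all these bounds are attained. The second moment `∑ W f ^ 2`
then shows that the column multiplicities `m v` satisfy `∑ m v = 61` and `∑ m v ^ 2 = 63`, so
exactly four nonzero `v` have even multiplicity. Since `G Gᵀ = ∑ m v • v vᵀ = 0` and
`∑ v vᵀ = 0` over all of `F₂⁶`, the four matrices `v vᵀ` sum to zero, which is impossible for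
four distinct binary vectors.
-/

open Matrix

section BinaryVectors

variable {ι : Type*} [Fintype ι]

lemma zmod2_ne_zero_iff (a : ZMod 2) : a ≠ 0 ↔ a = 1 := by
  revert a; decide

lemma wt_mul_self (x : ι → ZMod 2) : wt (x * x) = wt x := by
  simp only [wt, Pi.mul_apply, ne_eq, mul_self_eq_zero]

lemma natCast_wt_mul (x y : ι → ZMod 2) : (wt (x * y) : ZMod 2) = x ⬝ᵥ y := by
  rw [wt, natCast_card_filter, dotProduct]
  refine sum_congr rfl fun i _ => ?_
  rw [Pi.mul_apply]
  generalize x i * y i = a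
  revert a; decide

lemma wt_add_add_two_mul_wt_mul (x y : ι → ZMod 2) :
    wt (x + y) + 2 * wt (x * y) = wt x + wt y := by
  simp only [wt, card_filter, mul_sum, ← sum_add_distrib]
  have key : ∀ a b : ZMod 2, ((if a + b ≠ 0 then 1 else 0) + 2 * if a * b ≠ 0 then 1 else 0) =
      (if a ≠ 0 then 1 else 0) + if b ≠ 0 then 1 else 0 := by decide
  exact sum_congr rfl fun i _ => key (x i) (y i)

lemma natCast_half_wt_add {x y : ι → ZMod 2} (hx : x ⬝ᵥ x = 0) (hy : y ⬝ᵥ y = 0)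
    (hxy : x ⬝ᵥ y = 0) :
    ((wt (x + y) / 2 : ℕ) : ZMod 2) = (wt x / 2 : ℕ) + (wt y / 2 : ℕ) := by
  have even_wt : ∀ {z w : ι → ZMod 2}, z ⬝ᵥ w = 0 → Even (wt (z * w)) := fun h =>
    ZMod.natCast_eq_zero_iff_even.mp (by rw [natCast_wt_mul, h])
  obtain ⟨a, ha⟩ := wt_mul_self x ▸ even_wt hx
  obtain ⟨b, hb⟩ := wt_mul_self y ▸ even_wt hy
  obtain ⟨c, hc⟩ := even_wt hxy
  have hsum := wt_add_add_two_mul_wt_mul x y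
  have key : wt (x + y) / 2 + 2 * c = a + b := by omega
  rw [show wt x / 2 = a by omega, show wt y / 2 = b by omega, ← Nat.cast_add, ← key]
  push_cast
  rw [show (2 : ZMod 2) = 0 from rfl, zero_mul, add_zero]

lemma sum_wt_eq_sum_card {α : Type*} [Fintype α] (x : α → ι → ZMod 2) :
    ∑ a, wt (x a) = ∑ i, #{a | x a i ≠ 0} := by
  simp only [wt, card_filter]
  exact sum_comm

lemma sum_wt_sq_eq_sum_card {α : Type*} [Fintype α] (x : α → ι → ZMod 2) :
    ∑ a, wt (x a) ^ 2 = ∑ i, ∑ j, #{a | x a i ≠ 0 ∧ x a j ≠ 0} := by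
  simp only [wt, card_filter, sq, sum_mul_sum, ite_zero_mul_ite_zero, mul_one]
  rw [sum_comm]
  exact sum_congr rfl fun i _ => sum_comm

end BinaryVectors

lemma card_mul_card_fiber_of_surjective {G H : Type*} [AddGroup G] [Fintype G] [AddMonoid H]
    [Fintype H] [DecidableEq H] (φ : G →+ H) (hφ : Function.Surjective φ) (y : H) :
    Fintype.card H * #{g | φ g = y} = Fintype.card G := by
  calc Fintype.card H * #{g | φ g = y} = ∑ z, #{g | φ g = z} := by
        rw [sum_congr rfl fun z _ => AddMonoidHom.card_fiber_eq_of_mem_range φ (hφ z) (hφ y),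
          sum_const, card_univ, smul_eq_mul]
    _ = Fintype.card G := (card_eq_sum_card_fiberwise (by simp)).symm

lemma sum_comp_eq_sum_card_nsmul {ι β M : Type*} [Fintype ι] [Fintype β] [DecidableEq β]
    [AddCommMonoid M] (c : ι → β) (F : β → M) : ∑ i, F (c i) = ∑ b, #{i | c i = b} • F b := by
  rw [← sum_fiberwise univ c fun i => F (c i)]
  refine sum_congr rfl fun b _ => ?_
  rw [sum_congr rfl fun i hi => by rw [(mem_filter.mp hi).2], sum_const]

lemma sum_sum_ite_eq_eq_sum_card_sq {ι β : Type*} [Fintype ι] [Fintype β] [DecidableEq β]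
    (c : ι → β) : ∑ i, ∑ j, (if c i = c j then 1 else 0) = ∑ b, #{i | c i = b} ^ 2 := by
  have hrow : ∀ i, ∑ j, (if c i = c j then 1 else 0) = #{j | c j = c i} := fun i => by
    simp only [sum_boole, Nat.cast_id, eq_comm (a := c i)]
  rw [sum_congr rfl fun i _ => hrow i, sum_comp_eq_sum_card_nsmul c fun b => #{j | c j = b}]
  simp only [smul_eq_mul, sq]

lemma card_filter_even_add_sum_eq {α : Type*} [Fintype α] (m : α → ℕ)
    (h : ∑ a, m a ^ 2 = ∑ a, m a + 2) : #{a | Even (m a)} + ∑ a, m a = Fintype.card α + 2 := by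
  have hpairs : ∑ a, m a * (m a - 1) = 2 := by
    have : ∑ a, m a ^ 2 = ∑ a, m a * (m a - 1) + ∑ a, m a := by
      rw [← sum_add_distrib]
      exact sum_congr rfl fun a _ => by cases m a <;> simp [sq, Nat.mul_succ]
    omega
  have hle : ∀ a, m a ≤ 2 := fun a => by
    have := hpairs ▸ single_le_sum (fun a _ => Nat.zero_le (m a * (m a - 1))) (mem_univ a)
    by_contra! h3
    have : 3 * 2 ≤ m a * (m a - 1) := Nat.mul_le_mul h3 (by omega)
    omega
  have hpoint : ∀ a, (if Even (m a) then 1 else 0) + m a = 1 + m a * (m a - 1) := fun a => by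
    have := hle a
    interval_cases m a <;> decide
  rw [card_filter, ← sum_add_distrib, sum_congr rfl fun a _ => hpoint a, sum_add_distrib, hpairs]
  simp

lemma ite_even_eq_succ_nsmul {M : Type*} [AddCommGroup M] [Module (ZMod 2) M] (n : ℕ) (x : M) :
    (if Even n then x else 0) = (n + 1) • x := by
  rw [← Nat.cast_smul_eq_nsmul (ZMod 2)]
  split_ifs with hn
  · rw [ZMod.natCast_eq_one_iff_odd.mpr hn.add_one, one_smul]
  · rw [ZMod.natCast_eq_zero_iff_even.mpr (Nat.not_even_iff_odd.mp hn).add_one, zero_smul]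

section DotProduct

variable {ι : Type*} [Fintype ι] [DecidableEq ι]

lemma exists_dotProduct_eq_zero_and_eq_one {u v : ι → ZMod 2} (huv : u ≠ v) (hv : v ≠ 0) :
    ∃ r, r ⬝ᵥ u = 0 ∧ r ⬝ᵥ v = 1 := by
  obtain ⟨j, hj⟩ := Function.ne_iff.mp huv
  obtain ⟨k, hk⟩ := Function.ne_iff.mp hv
  have key : ∀ uj uk vj vk : ZMod 2, uj ≠ vj → vk ≠ 0 →
      ∃ s t : ZMod 2, s * uj + t * uk = 0 ∧ s * vj + t * vk = 1 := by decide
  obtain ⟨s, t, hu, hv⟩ := key (u j) (u k) (v j) (v k) hj hk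
  exact ⟨Pi.single j s + Pi.single k t, by simpa [add_dotProduct] using hu,
    by simpa [add_dotProduct] using hv⟩

lemma two_mul_card_dotProduct_ne_zero {v : ι → ZMod 2} (hv : v ≠ 0) :
    2 * #{f | f ⬝ᵥ v ≠ 0} = 2 ^ Fintype.card ι := by
  let φ : (ι → ZMod 2) →+ ZMod 2 := AddMonoidHom.mk' (· ⬝ᵥ v) fun f g => add_dotProduct f g v
  obtain ⟨r, -, hr⟩ := exists_dotProduct_eq_zero_and_eq_one hv.symm hv
  have hφ : Function.Surjective φ := fun y => ⟨y • r, by simp [φ, hr]⟩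
  simpa [φ, zmod2_ne_zero_iff, Fintype.card_fun] using card_mul_card_fiber_of_surjective φ hφ 1

lemma four_mul_card_dotProduct_ne_zero_and {u v : ι → ZMod 2} (hu : u ≠ 0) (hv : v ≠ 0)
    (huv : u ≠ v) : 4 * #{f | f ⬝ᵥ u ≠ 0 ∧ f ⬝ᵥ v ≠ 0} = 2 ^ Fintype.card ι := by
  let φ : (ι → ZMod 2) →+ ZMod 2 × ZMod 2 :=
    AddMonoidHom.mk' (fun f => (f ⬝ᵥ u, f ⬝ᵥ v)) fun f g => by simp [add_dotProduct]
  obtain ⟨r, hru, hrv⟩ := exists_dotProduct_eq_zero_and_eq_one huv hv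
  obtain ⟨s, hsv, hsu⟩ := exists_dotProduct_eq_zero_and_eq_one huv.symm hu
  have hφ : Function.Surjective φ := fun y => ⟨y.1 • s + y.2 • r, by simp [φ, add_dotProduct, *]⟩
  simpa [φ, zmod2_ne_zero_iff, Fintype.card_fun, Fintype.card_prod] using
    card_mul_card_fiber_of_surjective φ hφ (1, 1)

lemma sum_ite_ne_zero_add_one :
    ∑ f : ι → ZMod 2, (if f ≠ 0 then 1 else 0) + 1 = 2 ^ Fintype.card ι := by
  rw [sum_boole, Nat.cast_id, filter_ne', card_erase_add_one (mem_univ _), card_univ,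
    Fintype.card_fun, ZMod.card]

lemma sum_vecMulVec_self_eq_zero (hι : 3 ≤ Fintype.card ι) :
    ∑ v : ι → ZMod 2, vecMulVec v v = 0 := by
  ext k l
  have hsingle : ∀ j, (Pi.single j 1 : ι → ZMod 2) ≠ 0 := fun j =>
    Pi.single_ne_zero_iff.mpr one_ne_zero
  have hcount : Even #{v : ι → ZMod 2 | v ⬝ᵥ Pi.single k 1 ≠ 0 ∧ v ⬝ᵥ Pi.single l 1 ≠ 0} := by
    obtain ⟨n, hn⟩ := Nat.exists_eq_add_of_le' hι
    have hpow : 2 ^ Fintype.card ι = 8 * 2 ^ n := by rw [hn, pow_add]; ring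
    by_cases hkl : k = l
    · have := two_mul_card_dotProduct_ne_zero (hsingle k)
      subst hkl
      simp only [and_self]
      exact ⟨2 * 2 ^ n, by omega⟩
    · have := four_mul_card_dotProduct_ne_zero_and (hsingle k) (hsingle l)
        fun h => by simpa [hkl] using congrFun h k
      exact ⟨2 ^ n, by omega⟩
  have hmul : ∀ a b : ZMod 2, a * b = if a ≠ 0 ∧ b ≠ 0 then 1 else 0 := by decide
  rw [← ZMod.natCast_eq_zero_iff_even, natCast_card_filter] at hcount
  simpa only [Matrix.sum_apply, vecMulVec_apply, dotProduct_single, mul_one, ← hmul,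
    Matrix.zero_apply] using hcount

end DotProduct

lemma sum_vecMulVec_self_ne_zero_of_card_eq_four {ι : Type*} {S : Finset (ι → ZMod 2)}
    (hS : #S = 4) : ∑ v ∈ S, vecMulVec v v ≠ 0 := by
  classical
  obtain ⟨a, b, c, d, hab, hac, had, hbc, hbd, hcd, rfl⟩ := card_eq_four.mp hS
  intro h
  have hentry : ∀ k l, a k * a l + b k * b l + c k * c l + d k * d l = 0 := fun k l => by
    simpa [sum_insert, hab, hac, had, hbc, hbd, hcd, add_assoc, vecMulVec_apply] using
      congrFun (congrFun h k) l
  -- The diagonal entries force `d = a + b + c`; the `(k, l)` entry then reads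
  -- `(a + b) k * (a + c) l = (a + c) k * (a + b) l`.
  have key : ∀ ak bk ck dk al bl cl dl : ZMod 2, ak ≠ bk →
      ak * ak + bk * bk + ck * ck + dk * dk = 0 → al * al + bl * bl + cl * cl + dl * dl = 0 →
      ak * al + bk * bl + ck * cl + dk * dl = 0 → (ak = ck → al = cl) ∧ (ak ≠ ck → bl = cl) := by
    decide
  obtain ⟨k, hk⟩ := Function.ne_iff.mp hab
  have hcol : ∀ l, (a k = c k → a l = c l) ∧ (a k ≠ c k → b l = c l) := fun l =>
    key _ _ _ (d k) _ _ _ (d l) hk (hentry k k) (hentry l l) (hentry k l)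
  by_cases hck : a k = c k
  · exact hac (funext fun l => (hcol l).1 hck)
  · exact hbc (funext fun l => (hcol l).2 hck)

section GeneratorMatrix

variable {κ ι : Type*} [Fintype κ] [Fintype ι]

def colMult [DecidableEq κ] (G : Matrix κ ι (ZMod 2)) (v : κ → ZMod 2) : ℕ := #{i | G.col i = v}

lemma sum_colMult [DecidableEq κ] (G : Matrix κ ι (ZMod 2)) : ∑ v, colMult G v = Fintype.card ι :=
  (card_eq_sum_card_fiberwise (by simp)).symm

lemma vecMul_dotProduct_vecMul_eq_zero {G : Matrix κ ι (ZMod 2)} (hG : G * Gᵀ = 0)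
    (f g : κ → ZMod 2) : (f ᵥ* G) ⬝ᵥ (g ᵥ* G) = 0 := by
  rw [← mulVec_transpose G g, dotProduct_mulVec, vecMul_vecMul, hG, vecMul_zero, zero_dotProduct]

def halfWtHom {G : Matrix κ ι (ZMod 2)} (hG : G * Gᵀ = 0) : (κ → ZMod 2) →+ ZMod 2 :=
  AddMonoidHom.mk' (fun f => (wt (f ᵥ* G) / 2 : ℕ)) fun f g => by
    rw [add_vecMul]
    exact natCast_half_wt_add (vecMul_dotProduct_vecMul_eq_zero hG f f)
      (vecMul_dotProduct_vecMul_eq_zero hG g g) (vecMul_dotProduct_vecMul_eq_zero hG f g)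

lemma two_mul_sum_wt_vecMul [DecidableEq κ] (G : Matrix κ ι (ZMod 2)) :
    2 * ∑ f, wt (f ᵥ* G) = 2 ^ Fintype.card κ * #{i | G.col i ≠ 0} := by
  rw [sum_wt_eq_sum_card, mul_sum, card_filter, mul_sum]
  refine sum_congr rfl fun i _ => ?_
  split_ifs with hi
  · rw [mul_one]
    exact two_mul_card_dotProduct_ne_zero hi
  · simp [vecMul_apply, not_not.mp hi]

lemma four_mul_sum_wt_vecMul_sq [DecidableEq κ] {G : Matrix κ ι (ZMod 2)}
    (hcol : ∀ i, G.col i ≠ 0) :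
    4 * ∑ f, wt (f ᵥ* G) ^ 2 =
      2 ^ Fintype.card κ * (Fintype.card ι ^ 2 + ∑ v, colMult G v ^ 2) := by
  have hpair : ∀ i j, 4 * #{f : κ → ZMod 2 | (f ᵥ* G) i ≠ 0 ∧ (f ᵥ* G) j ≠ 0} =
      2 ^ Fintype.card κ * (1 + if G.col i = G.col j then 1 else 0) := fun i j => by
    split_ifs with hij
    · have := two_mul_card_dotProduct_ne_zero (hcol j)
      simp only [vecMul_apply, hij, and_self]
      omega
    · rw [add_zero, mul_one]
      exact four_mul_card_dotProduct_ne_zero_and (hcol i) (hcol j) hij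
  calc 4 * ∑ f, wt (f ᵥ* G) ^ 2
      = ∑ i, ∑ j, 2 ^ Fintype.card κ * (1 + if G.col i = G.col j then 1 else 0) := by
        simp only [sum_wt_sq_eq_sum_card, mul_sum, hpair]
    _ = 2 ^ Fintype.card κ * (Fintype.card ι ^ 2 + ∑ v, colMult G v ^ 2) := by
        simp only [colMult, ← sum_sum_ite_eq_eq_sum_card_sq, ← mul_sum, sum_add_distrib]
        simp [sq]

lemma sum_vecMulVec_filter_even_colMult_eq_zero [DecidableEq κ] {G : Matrix κ ι (ZMod 2)}
    (hG : G * Gᵀ = 0) (hκ : 3 ≤ Fintype.card κ) :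
    ∑ v ∈ {v | Even (colMult G v)}, vecMulVec v v = 0 := by
  have hcols : ∑ v, colMult G v • vecMulVec v v = 0 := by
    unfold colMult
    rw [← hG, ← sum_comp_eq_sum_card_nsmul G.col fun v => vecMulVec v v]
    ext k l
    simp [Matrix.sum_apply, mul_apply, vecMulVec_apply]
  rw [sum_filter, sum_congr rfl fun v _ => ite_even_eq_succ_nsmul _ _]
  simp only [succ_nsmul, sum_add_distrib, hcols, sum_vecMulVec_self_eq_zero hκ, add_zero]

end GeneratorMatrix

structure IsSOGenerator61_6_30 (G : Matrix (Fin 6) (Fin 61) (ZMod 2)) : Prop where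
  mul_transpose_eq_zero : G * Gᵀ = 0
  le_wt : ∀ f ≠ 0, 30 ≤ wt (f ᵥ* G)
  exists_wt_eq : ∃ f, wt (f ᵥ* G) = 30

namespace IsSOGenerator61_6_30

variable {G : Matrix (Fin 6) (Fin 61) (ZMod 2)}

lemma card_halfWtHom_eq_one (hG : IsSOGenerator61_6_30 G) :
    #{f | halfWtHom hG.1 f = 1} = 32 := by
  obtain ⟨f₀, hf₀⟩ := hG.exists_wt_eq
  have hsurj : Function.Surjective (halfWtHom hG.1) := fun y => by
    fin_cases y
    · exact ⟨0, map_zero _⟩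
    · exact ⟨f₀, by rw [halfWtHom, AddMonoidHom.mk'_apply, hf₀]; rfl⟩
  have := card_mul_card_fiber_of_surjective _ hsurj 1
  simp only [ZMod.card, Fintype.card_fun, Fintype.card_fin] at this
  omega

lemma le_wt_vecMul (hG : IsSOGenerator61_6_30 G) (f : Fin 6 → ZMod 2) :
    32 * (if f ≠ 0 then 1 else 0) ≤
      wt (f ᵥ* G) + 2 * (if halfWtHom hG.1 f = 1 then 1 else 0) := by
  by_cases hf : f = 0
  · simp [hf]
  have h30 := hG.le_wt f hf
  rw [if_pos hf]
  split_ifs with hψ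
  · omega
  · -- a weight `≡ 0 mod 4` that is at least 30 is at least 32
    have heven : Even (wt (f ᵥ* G) / 2) :=
      ZMod.natCast_eq_zero_iff_even.mp (by simpa [← zmod2_ne_zero_iff, halfWtHom] using hψ)
    obtain ⟨r, hr⟩ := heven
    omega

lemma wt_vecMul_add_eq (hG : IsSOGenerator61_6_30 G) (f : Fin 6 → ZMod 2) :
    wt (f ᵥ* G) + 2 * (if halfWtHom hG.1 f = 1 then 1 else 0) =
      32 * (if f ≠ 0 then 1 else 0) := by
  have hupper : 2 * ∑ f, wt (f ᵥ* G) ≤ 2 ^ 6 * 61 := by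
    rw [two_mul_sum_wt_vecMul, Fintype.card_fin]
    exact Nat.mul_le_mul_left _ ((card_filter_le _ _).trans_eq (card_fin 61))
  have hnonzero := sum_ite_ne_zero_add_one (ι := Fin 6)
  have hsum : ∑ f : Fin 6 → ZMod 2, 32 * (if f ≠ 0 then 1 else 0) =
      ∑ f, (wt (f ᵥ* G) + 2 * (if halfWtHom hG.1 f = 1 then 1 else 0)) := by
    refine le_antisymm (sum_le_sum fun f _ => hG.le_wt_vecMul f) ?_
    rw [sum_add_distrib, ← mul_sum, ← mul_sum, sum_boole, hG.card_halfWtHom_eq_one]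
    simp only [Fintype.card_fin, Nat.cast_id] at hnonzero ⊢
    omega
  exact ((sum_eq_sum_iff_of_le fun f _ => hG.le_wt_vecMul f).mp hsum f (mem_univ f)).symm

lemma sum_wt_vecMul_eq (hG : IsSOGenerator61_6_30 G) : ∑ f, wt (f ᵥ* G) = 1952 := by
  have hsum := sum_congr rfl fun f (_ : f ∈ univ) => hG.wt_vecMul_add_eq f
  have hnonzero := sum_ite_ne_zero_add_one (ι := Fin 6)
  rw [sum_add_distrib, ← mul_sum, ← mul_sum, sum_boole, hG.card_halfWtHom_eq_one] at hsum
  simp only [Fintype.card_fin, Nat.cast_id] at hnonzero hsum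
  omega

lemma col_ne_zero (hG : IsSOGenerator61_6_30 G) (i : Fin 61) : G.col i ≠ 0 := by
  have h := two_mul_sum_wt_vecMul G
  rw [hG.sum_wt_vecMul_eq, Fintype.card_fin] at h
  have hall : #{i | G.col i ≠ 0} = #(univ : Finset (Fin 61)) := by
    rw [card_fin]
    omega
  exact card_filter_eq_iff.mp hall i (mem_univ i)

lemma sum_wt_vecMul_sq (hG : IsSOGenerator61_6_30 G) : ∑ f, wt (f ᵥ* G) ^ 2 = 60544 := by
  have hpoint : ∀ f, wt (f ᵥ* G) ^ 2 + 124 * (if halfWtHom hG.1 f = 1 then 1 else 0) =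
      1024 * (if f ≠ 0 then 1 else 0) := fun f => by
    have h := hG.wt_vecMul_add_eq f
    have hw : wt (f ᵥ* G) = 0 ∨ wt (f ᵥ* G) = 30 ∨ wt (f ᵥ* G) = 32 := by
      split_ifs at h <;> omega
    rcases hw with hw | hw | hw <;> rw [hw] at h ⊢ <;> split_ifs at h ⊢ <;> omega
  have hsum := sum_congr rfl fun f (_ : f ∈ univ) => hpoint f
  have hnonzero := sum_ite_ne_zero_add_one (ι := Fin 6)
  rw [sum_add_distrib, ← mul_sum, ← mul_sum, sum_boole, hG.card_halfWtHom_eq_one] at hsum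
  simp only [Fintype.card_fin, Nat.cast_id] at hnonzero hsum
  omega

lemma sum_colMult_sq (hG : IsSOGenerator61_6_30 G) : ∑ v, colMult G v ^ 2 = 63 := by
  have := four_mul_sum_wt_vecMul_sq hG.col_ne_zero
  rw [hG.sum_wt_vecMul_sq, Fintype.card_fin, Fintype.card_fin] at this
  omega

lemma card_filter_even_colMult (hG : IsSOGenerator61_6_30 G) : #{v | Even (colMult G v)} = 5 := by
  have hsum := sum_colMult G
  have := card_filter_even_add_sum_eq (colMult G) (by rw [hG.sum_colMult_sq, hsum]; rfl)
  simp only [hsum, Fintype.card_fun, Fintype.card_fin, ZMod.card] at this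
  omega

end IsSOGenerator61_6_30

theorem not_isSOGenerator61_6_30 (G : Matrix (Fin 6) (Fin 61) (ZMod 2)) :
    ¬ IsSOGenerator61_6_30 G := by
  intro hG
  set S : Finset (Fin 6 → ZMod 2) := {v | Even (colMult G v)}
  have hzero : 0 ∈ S := by
    have : colMult G 0 = 0 :=
      card_eq_zero.mpr (filter_eq_empty_iff.mpr fun i _ => hG.col_ne_zero i)
    simp [S, this]
  refine sum_vecMulVec_self_ne_zero_of_card_eq_four (S := S.erase 0) ?_ ?_
  · rw [card_erase_of_mem hzero, hG.card_filter_even_colMult]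
  · rw [sum_erase S (by simp)]
    exact sum_vecMulVec_filter_even_colMult_eq_zero hG.1 (by simp)

theorem stmt13 :
    ¬ ∃ C : Submodule (ZMod 2) (Fin 61 → ZMod 2),
      Module.finrank (ZMod 2) C = 6 ∧ SelfOrthogonal C ∧ HasMinDist C 30 := by
  rintro ⟨C, hrank, hSO, ⟨x₀, hx₀, -, hwt₀⟩, hmin⟩
  let b := Module.finBasisOfFinrankEq (ZMod 2) C hrank
  let G : Matrix (Fin 6) (Fin 61) (ZMod 2) := of fun k => (b k : Fin 61 → ZMod 2)
  have hcodeword : ∀ f, f ᵥ* G = (b.equivFun.symm f : Fin 61 → ZMod 2) := fun f => by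
    rw [vecMul_eq_sum, b.equivFun_symm_apply, Submodule.coe_sum]
    rfl
  refine not_isSOGenerator61_6_30 G ⟨?_, fun f hf => ?_, b.equivFun ⟨x₀, hx₀⟩, ?_⟩
  · ext k l
    exact hSO _ (b k).2 _ (b l).2
  · rw [hcodeword]
    exact hmin _ (b.equivFun.symm f).2
      (by simpa only [ne_eq, Submodule.coe_eq_zero, LinearEquiv.map_eq_zero_iff] using hf)
  · rw [hcodeword, LinearEquiv.symm_apply_apply]
    exact hwt₀
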